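/- Let μ be a supermodular fuzzy measure on N and let A be a nonempty proper subset of N. Define l₁ = max_{i,j∈A, i≠j} (μ(A\{i}) + μ(A\{j}) − μ(A\{i,j})), l₂ = max_{i,j∉A, i≠j} (μ(A∪{i}) + μ(A∪{j}) − μ(A∪{i,j})), and l₃ = min_{i∈A, j∉A} (μ(A∪{j}) − μ((A\{i})∪{j}) + μ(A\{i})) (using conventions 0 for empty max and 1 for empty min). Then replacing μ(A) with any value t ∈ [max(l₁,l₂), l₃] yields a set function that is still a supermodular fuzzy measure. -/

import Mathlib

/-!
Monotonicity and supermodularity of a set function are local properties: it suffices to check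
`f S ≤ f (S ∪ {a})` and `f (S ∪ {a}) + f (S ∪ {b}) ≤ f (S ∪ {a, b}) + f S` for `a, b ∉ S`,
since increasing differences along single insertions telescope. Changing the value at `A` only
affects the squares `S, S ∪ {a}, S ∪ {b}, S ∪ {a, b}` having `A` as a corner, and `l₁`, `l₃`,
`l₂` are exactly the inequalities for the squares with `A` as top, side and bottom corner.
Monotonicity at `A` follows from the same inequalities, and the range `[0, 1]` from monotonicity,
since `μ ∅` and `μ univ` are unchanged.
-/

open Finset Function

section SetFunction

variable {α β : Type*} [DecidableEq α] {f : Finset α → β}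

theorem Finset.monotone_of_le_insert [Preorder β] (h : ∀ s a, a ∉ s → f s ≤ f (insert a s)) :
    Monotone f :=
  (monotone_iff_forall_covBy f).2 fun s _ hst => by
    obtain ⟨a, ha, rfl⟩ := hst.exists_finset_insert
    exact h s a ha

theorem Monotone.update_of_erase_le_of_le_insert [Preorder β] (hf : Monotone f)
    {A : Finset α} {x : β} (hlow : ∀ a ∈ A, f (A.erase a) ≤ x)
    (hhigh : ∀ b ∉ A, x ≤ f (insert b A)) : Monotone (update f A x) := by
  refine monotone_of_le_insert fun s a ha => ?_
  by_cases hsA : s = A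
  · subst hsA
    rw [update_self, update_of_ne (insert_ne_self.2 ha)]
    exact hhigh a ha
  by_cases hasA : insert a s = A
  · subst hasA
    rw [update_self, update_of_ne hsA]
    simpa only [erase_insert ha] using hlow a (mem_insert_self a s)
  · rw [update_of_ne hsA, update_of_ne hasA]
    exact hf (subset_insert a s)

variable [AddCommGroup β] [PartialOrder β] [IsOrderedAddMonoid β]

def IsSupermodular (f : Finset α → β) : Prop :=
  ∀ s t, f s + f t ≤ f (s ∪ t) + f (s ∩ t)

theorem sub_le_sub_insert_of_subset
    (h : ∀ s a b, a ∉ s → b ∉ s → a ≠ b →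
      f (insert a s) + f (insert b s) ≤ f (insert a (insert b s)) + f s)
    {s t : Finset α} {a : α} (hst : s ⊆ t) (ha : a ∉ t) :
    f (insert a s) - f s ≤ f (insert a t) - f t := by
  obtain ⟨d, hd, rfl⟩ : ∃ d, Disjoint s d ∧ t = s ∪ d :=
    ⟨t \ s, disjoint_sdiff, (union_sdiff_of_subset hst).symm⟩
  clear hst
  induction d using Finset.induction_on with
  | empty => simp
  | insert b d hb ih =>
    rw [disjoint_insert_right] at hd
    rw [union_insert, mem_insert, not_or] at ha
    rw [union_insert]
    calc f (insert a s) - f s ≤ f (insert a (s ∪ d)) - f (s ∪ d) := ih hd.2 ha.2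
      _ ≤ f (insert a (insert b (s ∪ d))) - f (insert b (s ∪ d)) :=
        sub_le_sub_iff.2 (h _ a b ha.2 (by simp [hd.1, hb]) ha.1)

theorem sub_le_sub_union_of_subset
    (h : ∀ s a b, a ∉ s → b ∉ s → a ≠ b →
      f (insert a s) + f (insert b s) ≤ f (insert a (insert b s)) + f s)
    {s t d : Finset α} (hst : s ⊆ t) (hd : Disjoint t d) :
    f (s ∪ d) - f s ≤ f (t ∪ d) - f t := by
  induction d using Finset.induction_on with
  | empty => simp
  | insert b d hb ih =>
    rw [disjoint_insert_right] at hd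
    rw [union_insert, union_insert]
    calc f (insert b (s ∪ d)) - f s
        = (f (insert b (s ∪ d)) - f (s ∪ d)) + (f (s ∪ d) - f s) := (sub_add_sub_cancel ..).symm
      _ ≤ (f (insert b (t ∪ d)) - f (t ∪ d)) + (f (t ∪ d) - f t) :=
        add_le_add (sub_le_sub_insert_of_subset h (union_subset_union hst le_rfl)
          (by simp [hd.1, hb])) (ih hd.2)
      _ = f (insert b (t ∪ d)) - f t := sub_add_sub_cancel ..

theorem isSupermodular_of_insert
    (h : ∀ s a b, a ∉ s → b ∉ s → a ≠ b →
      f (insert a s) + f (insert b s) ≤ f (insert a (insert b s)) + f s) :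
    IsSupermodular f := fun s t => by
  have := sub_le_sub_union_of_subset h (inter_subset_right (s₁ := s))
    (disjoint_sdiff (s := t) (t := s))
  rwa [union_comm (s ∩ t), sdiff_union_inter, union_sdiff_self_eq_union, union_comm,
    sub_le_sub_iff] at this

theorem IsSupermodular.update (hf : IsSupermodular f) {A : Finset α} {x : β}
    (htop : ∀ a ∈ A, ∀ b ∈ A, a ≠ b →
      f (A.erase b) + f (A.erase a) ≤ x + f ((A.erase a).erase b))
    (hside : ∀ a ∈ A, ∀ b ∉ A,
      x + f (insert b (A.erase a)) ≤ f (insert b A) + f (A.erase a))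
    (hbot : ∀ a ∉ A, ∀ b ∉ A, a ≠ b →
      f (insert a A) + f (insert b A) ≤ f (insert a (insert b A)) + x) :
    IsSupermodular (update f A x) := by
  refine isSupermodular_of_insert fun s a b ha hb hab => ?_
  have ha' : a ∉ insert b s := by simp [ha, hab]
  have hb' : b ∉ insert a s := by simp [hb, hab.symm]
  have has : insert a s ≠ s := insert_ne_self.2 ha
  have hbs : insert b s ≠ s := insert_ne_self.2 hb
  have hab' : insert a s ≠ insert b s := fun h => hab ((insert_inj ha).1 h)
  have hta : insert a (insert b s) ≠ insert b s := insert_ne_self.2 ha'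
  have htb : insert a (insert b s) ≠ insert a s := by
    rw [insert_comm]; exact insert_ne_self.2 hb'
  have hts : insert a (insert b s) ≠ s := ne_of_mem_of_not_mem' (mem_insert_self a _) ha
  by_cases h0 : s = A
  · subst h0
    rw [update_of_ne has, update_of_ne hbs, update_of_ne hts, update_self]
    exact hbot a ha b hb hab
  by_cases h1 : insert a s = A
  · subst h1
    rw [update_self, update_of_ne hab'.symm, update_of_ne htb, update_of_ne has.symm]
    simpa only [erase_insert ha, insert_comm b a] using hside a (mem_insert_self a s) b hb'
  by_cases h2 : insert b s = A
  · subst h2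
    rw [update_self, update_of_ne hab', update_of_ne hta, update_of_ne hbs.symm, add_comm]
    simpa only [erase_insert hb] using hside b (mem_insert_self b s) a ha'
  by_cases h3 : insert a (insert b s) = A
  · subst h3
    rw [update_self, update_of_ne htb.symm, update_of_ne hta.symm, update_of_ne hts.symm]
    have := htop a (mem_insert_self _ _) b (mem_insert_of_mem (mem_insert_self _ _)) hab
    rwa [erase_insert ha', erase_insert hb, insert_comm a b, erase_insert hb'] at this
  rw [update_of_ne h0, update_of_ne h1, update_of_ne h2, update_of_ne h3]
  have hunion : insert a s ∪ insert b s = insert a (insert b s) := by grind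
  have hinter : insert a s ∩ insert b s = s := by grind
  simpa only [hunion, hinter] using hf (insert a s) (insert b s)

theorem Monotone.update_of_supermodular_bounds (hf : Monotone f)
    {A : Finset α} {x : β} (hA : A.Nonempty) (hempty : f ∅ ≤ x)
    (htop : ∀ a ∈ A, ∀ b ∈ A, a ≠ b →
      f (A.erase b) + f (A.erase a) ≤ x + f ((A.erase a).erase b))
    (hside : ∀ a ∈ A, ∀ b ∉ A,
      x + f (insert b (A.erase a)) ≤ f (insert b A) + f (A.erase a)) :
    Monotone (update f A x) := by
  refine hf.update_of_erase_le_of_le_insert (fun a ha => ?_) (fun b hb => ?_)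
  · obtain hempty' | ⟨b, hb⟩ := (A.erase a).eq_empty_or_nonempty
    · rwa [hempty']
    obtain ⟨hba, hb⟩ := mem_erase.1 hb
    refine le_of_add_le_add_left (a := f (A.erase b)) ?_
    calc f (A.erase b) + f (A.erase a) ≤ x + f ((A.erase a).erase b) := htop a ha b hb hba.symm
      _ ≤ x + f (A.erase b) :=
        add_le_add le_rfl (hf (erase_right_comm (s := A) ▸ erase_subset _ _))
      _ = f (A.erase b) + x := add_comm _ _
  · obtain ⟨a, ha⟩ := hA
    refine le_of_add_le_add_right (a := f (insert b (A.erase a))) ?_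
    calc x + f (insert b (A.erase a)) ≤ f (insert b A) + f (A.erase a) := hside a ha b hb
      _ ≤ f (insert b A) + f (insert b (A.erase a)) := add_le_add le_rfl (hf (subset_insert _ _))

end SetFunction

theorem supermodular_allowable_range_general
    {ι : Type*} [Fintype ι] [DecidableEq ι]
    (μ : Finset ι → ℝ)
    (h0 : μ ∅ = 0) (h1 : μ Finset.univ = 1)
    (hmono : ∀ A B : Finset ι, A ⊆ B → μ A ≤ μ B)
    (hsuper : ∀ A B : Finset ι, μ (A ∪ B) + μ (A ∩ B) ≥ μ A + μ B)
    (A : Finset ι) (hA1 : A ≠ ∅) (hA2 : A ≠ Finset.univ) (t : ℝ)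
    (hl1 : ((A ×ˢ A).filter (fun p => p.1 ≠ p.2)).fold max 0
            (fun p => μ (A \ {p.1}) + μ (A \ {p.2}) - μ (A \ {p.1, p.2})) ≤ t)
    (hl2 : (((Finset.univ \ A) ×ˢ (Finset.univ \ A)).filter (fun p => p.1 ≠ p.2)).fold max 0
            (fun p => μ (A ∪ {p.1}) + μ (A ∪ {p.2}) - μ (A ∪ {p.1, p.2})) ≤ t)
    (hl3 : t ≤ (A ×ˢ (Finset.univ \ A)).fold min 1
            (fun p => μ (A ∪ {p.2}) - μ ((A \ {p.1}) ∪ {p.2}) + μ (A \ {p.1}))) :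
    (∀ S T : Finset ι, S ⊆ T → Function.update μ A t S ≤ Function.update μ A t T) ∧
    (∀ S : Finset ι, 0 ≤ Function.update μ A t S ∧ Function.update μ A t S ≤ 1) ∧
    (∀ S T : Finset ι,
      Function.update μ A t (S ∪ T) + Function.update μ A t (S ∩ T) ≥
        Function.update μ A t S + Function.update μ A t T) := by
  obtain ⟨ht0, hl1⟩ := (fold_max_le _).1 hl1
  have htop : ∀ a ∈ A, ∀ b ∈ A, a ≠ b →
      μ (A.erase b) + μ (A.erase a) ≤ t + μ ((A.erase a).erase b) := fun a ha b hb hab => by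
    have := hl1 (b, a) (by simp [ha, hb, hab.symm])
    simp only [sdiff_singleton_eq_erase, sdiff_insert] at this
    linarith
  have hside : ∀ a ∈ A, ∀ b ∉ A,
      t + μ (insert b (A.erase a)) ≤ μ (insert b A) + μ (A.erase a) := fun a ha b hb => by
    have := ((le_fold_min _).1 hl3).2 (a, b) (by simp [ha, hb])
    simp only [sdiff_singleton_eq_erase, union_singleton] at this
    linarith
  have hbot : ∀ a ∉ A, ∀ b ∉ A, a ≠ b →
      μ (insert a A) + μ (insert b A) ≤ μ (insert a (insert b A)) + t := fun a ha b hb hab => by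
    have := ((fold_max_le _).1 hl2).2 (a, b) (by simp [ha, hb, hab])
    simp only [union_singleton, union_insert] at this
    linarith
  have hmono' : Monotone (update μ A t) :=
    Monotone.update_of_supermodular_bounds (fun S T => hmono S T) (nonempty_iff_ne_empty.2 hA1)
      (h0 ▸ ht0) htop hside
  refine ⟨fun S T => @hmono' S T, fun S => ⟨?_, ?_⟩,
    IsSupermodular.update (fun S T => hsuper S T) htop hside hbot⟩
  · calc 0 = update μ A t ∅ := by rw [update_of_ne hA1.symm, h0]
      _ ≤ update μ A t S := hmono' (empty_subset S)
  · calc update μ A t S ≤ update μ A t univ := hmono' (subset_univ S)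
      _ = 1 := by rw [update_of_ne hA2.symm, h1]

/-- Allowable range for supermodular measures: replacing μ(A) with any
t ∈ [max(l₁,l₂), l₃] keeps the set function a supermodular fuzzy measure. -/
theorem supermodular_allowable_range
    {ι : Type*} [Fintype ι] [DecidableEq ι]
    (hcard : 2 ≤ Fintype.card ι) (μ : Finset ι → ℝ)
    (h0 : μ ∅ = 0) (h1 : μ Finset.univ = 1)
    (hrange : ∀ A : Finset ι, 0 ≤ μ A ∧ μ A ≤ 1)
    (hmono : ∀ A B : Finset ι, A ⊆ B → μ A ≤ μ B)
    (hsuper : ∀ A B : Finset ι, μ (A ∪ B) + μ (A ∩ B) ≥ μ A + μ B)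
    (A : Finset ι) (hA1 : A ≠ ∅) (hA2 : A ≠ Finset.univ) (t : ℝ)
    (hl1 : ((A ×ˢ A).filter (fun p => p.1 ≠ p.2)).fold max 0
            (fun p => μ (A \ {p.1}) + μ (A \ {p.2}) - μ (A \ {p.1, p.2})) ≤ t)
    (hl2 : (((Finset.univ \ A) ×ˢ (Finset.univ \ A)).filter (fun p => p.1 ≠ p.2)).fold max 0
            (fun p => μ (A ∪ {p.1}) + μ (A ∪ {p.2}) - μ (A ∪ {p.1, p.2})) ≤ t)
    (hl3 : t ≤ (A ×ˢ (Finset.univ \ A)).fold min 1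
            (fun p => μ (A ∪ {p.2}) - μ ((A \ {p.1}) ∪ {p.2}) + μ (A \ {p.1}))) :
    (∀ S T : Finset ι, S ⊆ T → Function.update μ A t S ≤ Function.update μ A t T) ∧
    (∀ S : Finset ι, 0 ≤ Function.update μ A t S ∧ Function.update μ A t S ≤ 1) ∧
    (∀ S T : Finset ι,
      Function.update μ A t (S ∪ T) + Function.update μ A t (S ∩ T) ≥
        Function.update μ A t S + Function.update μ A t T) :=
  supermodular_allowable_range_general μ h0 h1 hmono hsuper A hA1 hA2 t hl1 hl2 hl3
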